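/- arXiv:2304.07126 — 5 statements merged into one kernel-verified Lean document; each statement's English description precedes it below -/
import Mathlib

section
/- Let p be a prime, 2 ≤ k, and fix j with 2 ≤ j ≤ k. Let B_k be the k × k matrix over 𝔽_p with (a,b)-entry 1 if a = b or a = b + 1 and 0 otherwise, and for a row vector v ∈ 𝔽_p^k and 0 ≤ i < p let A_{v,i} denote the (k+1) × (k+1) block matrix [[1, v],[0ᵀ, B_k^i]]. If the row vector (1, 0) is fixed under right multiplication by A_{v,i} (i.e., (1,0)·A_{v,i} = (1,0)) and the row vector (1, e_j) is fixed under right multiplication by A_{v,i}, where e_j is the j-th standard basis vector of 𝔽_p^k, then v = 0 and i = 0, so A_{v,i} is the identity matrix. In other words, {(1,0), (1,e_j)} is a base for the group of all such matrices A_{v,i} acting on the set Ω = {(1, v) : v ∈ 𝔽_p^k} by right multiplication. -/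
/-!
Fixing `(1, 0)` forces the first row of `A_{v,i}` to be `(1, 0)`, i.e. `v = 0`. Fixing `(1, e_j)`
then says that row `j` of `B_k ^ i` is `e_j`. But `B_k` is lower unitriangular, and for such
matrices the subdiagonal entries add up under multiplication, so the entry of `B_k ^ i` just left
of the diagonal in row `j` (which exists as `j ≥ 2`) is `i`. Hence `p ∣ i`, and `i < p` gives
`i = 0`.
-/

open Matrix

namespace Matrix.IsLowerTriangular

variable {ι R : Type*} [Fintype ι] [LinearOrder ι]

section NonUnitalNonAssocSemiring

variable [NonUnitalNonAssocSemiring R] {M N : Matrix ι ι R}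

theorem mul_apply_self (hM : M.IsLowerTriangular) (hN : N.IsLowerTriangular) (a : ι) :
    (M * N) a a = M a a * N a a := by
  rw [mul_apply]
  refine Finset.sum_eq_single a (fun c _ hca => ?_) (by simp)
  rcases lt_or_gt_of_ne hca with hca | hac
  · rw [hN (show OrderDual.toDual a < OrderDual.toDual c from hca), mul_zero]
  · rw [hM (show OrderDual.toDual c < OrderDual.toDual a from hac), zero_mul]

theorem mul_apply_of_covBy (hM : M.IsLowerTriangular) (hN : N.IsLowerTriangular) {a b : ι}
    (hba : b ⋖ a) : (M * N) a b = M a b * N b b + M a a * N a b := by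
  rw [mul_apply]
  refine Finset.sum_eq_add b a hba.ne (fun c _ ⟨hcb, hca⟩ => ?_) (by simp) (by simp)
  rcases lt_or_gt_of_ne hca with hca | hac
  · have hcb : c < b := lt_of_le_of_ne (hba.le_of_lt hca) hcb
    rw [hN (show OrderDual.toDual b < OrderDual.toDual c from hcb), mul_zero]
  · rw [hM (show OrderDual.toDual c < OrderDual.toDual a from hac), zero_mul]

end NonUnitalNonAssocSemiring

variable [DecidableEq ι] [Semiring R] {M : Matrix ι ι R}

theorem pow_apply_self (hM : M.IsLowerTriangular) (a : ι) (n : ℕ) :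
    (M ^ n) a a = M a a ^ n := by
  induction n with
  | zero => simp
  | succ n ih => rw [pow_succ, mul_apply_self (hM.pow n) hM, ih, pow_succ]

theorem pow_apply_of_covBy (hM : M.IsLowerTriangular) (hdiag : ∀ c, M c c = 1) {a b : ι}
    (hba : b ⋖ a) (n : ℕ) : (M ^ n) a b = n * M a b := by
  induction n with
  | zero => simp [one_apply_ne hba.ne']
  | succ n ih =>
    rw [pow_succ, mul_apply_of_covBy (hM.pow n) hM hba, ih, pow_apply_self hM, hdiag, hdiag,
      one_pow, mul_one, one_mul, Nat.cast_succ, add_one_mul]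

end Matrix.IsLowerTriangular

section Bidiagonal

variable {R : Type*} [Semiring R] {k : ℕ} {B : Matrix (Fin k) (Fin k) R}

theorem bidiagonal_pow_apply_of_covBy
    (hB : ∀ a b : Fin k, B a b = if a = b ∨ (a : ℕ) = (b : ℕ) + 1 then 1 else 0)
    {a b : Fin k} (hba : b ⋖ a) (n : ℕ) : (B ^ n) a b = n := by
  have hsub : (a : ℕ) = b + 1 := (Nat.covBy_iff_add_one_eq.mp (Fin.covBy_iff.mp hba)).symm
  have hlower : B.IsLowerTriangular := fun c d hcd => by
    have hcd : (c : ℕ) < d := hcd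
    rw [hB, if_neg (by omega)]
  rw [hlower.pow_apply_of_covBy (fun c => by simp [hB]) hba, hB, if_pos (Or.inr hsub), mul_one]

end Bidiagonal

section AffineMatrix

variable {R : Type*} [Semiring R] {k : ℕ}

/-- The block matrix `[[1, v], [0ᵀ, M]]`; the paper's `A_{v,i}` is `affineMatrix v (B_k ^ i)`. -/
def affineMatrix (v : Fin k → R) (M : Matrix (Fin k) (Fin k) R) :
    Matrix (Fin (k + 1)) (Fin (k + 1)) R :=
  Matrix.of (Fin.cons (Fin.cons 1 v) fun a => Fin.cons 0 (M a))

theorem cons_vecMul_affineMatrix (x : R) (w v : Fin k → R) (M : Matrix (Fin k) (Fin k) R) :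
    Fin.cons x w ᵥ* affineMatrix v M = Fin.cons x (x • v + w ᵥ* M) := by
  ext c
  cases c using Fin.cases <;> simp [affineMatrix, vecMul, dotProduct, Fin.sum_univ_succ]

theorem affineMatrix_zero_one : affineMatrix (0 : Fin k → R) 1 = 1 := by
  ext a b
  cases a using Fin.cases <;> cases b using Fin.cases <;>
    simp [affineMatrix, one_apply, Fin.succ_ne_zero, (Fin.succ_ne_zero _).symm]

end AffineMatrix

theorem base_for_Gkp_at_origin_general {p : ℕ} (k : ℕ)
    (B : Matrix (Fin k) (Fin k) (ZMod p))
    (hB : ∀ a b : Fin k, B a b =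
      if a = b ∨ (a : ℕ) = (b : ℕ) + 1 then 1 else 0)
    (j : Fin k) (hj : 1 ≤ (j : ℕ))
    (v : Fin k → ZMod p) (i : ℕ) (hi : i < p)
    (A : Matrix (Fin (k + 1)) (Fin (k + 1)) (ZMod p))
    (hA : A = Matrix.of (Fin.cons (Fin.cons 1 v) (fun a : Fin k => Fin.cons 0 ((B ^ i) a))))
    (hfix0 : Matrix.vecMul (Fin.cons 1 0) A = Fin.cons 1 0)
    (hfixj : Matrix.vecMul (Fin.cons 1 (Pi.single j 1)) A = Fin.cons 1 (Pi.single j 1)) :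
    v = 0 ∧ i = 0 ∧ A = 1 := by
  change A = affineMatrix v (B ^ i) at hA
  subst hA
  rw [cons_vecMul_affineMatrix] at hfix0 hfixj
  have hv : v = 0 := by simpa using Fin.cons_right_injective _ hfix0
  subst hv
  have hrow : (B ^ i).row j = Pi.single j 1 := by
    simpa using Fin.cons_right_injective _ hfixj
  let j' : Fin k := ⟨j - 1, by omega⟩
  have hj' : j' ⋖ j := Fin.covBy_iff.mpr (Nat.covBy_iff_add_one_eq.mpr (by simp [j']; omega))
  have hi0 : (i : ZMod p) = 0 := by
    rw [← bidiagonal_pow_apply_of_covBy hB hj' i, ← row_apply (B ^ i) j j', hrow,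
      Pi.single_eq_of_ne hj'.ne]
  obtain rfl : i = 0 := Nat.eq_zero_of_dvd_of_lt ((ZMod.natCast_eq_zero_iff i p).mp hi0) hi
  exact ⟨rfl, rfl, by rw [pow_zero, affineMatrix_zero_one]⟩

/-- Fix a prime `p`, `2 ≤ k` and `j` with `2 ≤ j ≤ k` (here `j : Fin k` is the
0-indexed position, so `1 ≤ j` encodes a 1-indexed `j` with `2 ≤ j ≤ k`).
Let `B` be the lower bidiagonal matrix `B_k` over `𝔽_p`, and let
`A = A_{v,i} = [[1, v], [0ᵀ, B_k^i]]` with `0 ≤ i < p` and `v ∈ 𝔽_p^k`.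
If the row vectors `(1, 0)` and `(1, e_j)` are both fixed under right
multiplication by `A`, then `v = 0`, `i = 0` and `A` is the identity matrix;
i.e. `{(1,0), (1,e_j)}` is a base for the group `\overline{G_k(p)}`. -/
theorem base_for_Gkp_at_origin {p : ℕ} [Fact p.Prime] (k : ℕ) (hk : 2 ≤ k)
    (B : Matrix (Fin k) (Fin k) (ZMod p))
    (hB : ∀ a b : Fin k, B a b =
      if a = b ∨ (a : ℕ) = (b : ℕ) + 1 then 1 else 0)
    (j : Fin k) (hj : 1 ≤ (j : ℕ))
    (v : Fin k → ZMod p) (i : ℕ) (hi : i < p)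
    (A : Matrix (Fin (k + 1)) (Fin (k + 1)) (ZMod p))
    (hA : A = Matrix.of (Fin.cons (Fin.cons 1 v) (fun a : Fin k => Fin.cons 0 ((B ^ i) a))))
    (hfix0 : Matrix.vecMul (Fin.cons 1 0) A = Fin.cons 1 0)
    (hfixj : Matrix.vecMul (Fin.cons 1 (Pi.single j 1)) A = Fin.cons 1 (Pi.single j 1)) :
    v = 0 ∧ i = 0 ∧ A = 1 :=
  base_for_Gkp_at_origin_general k B hB j hj v i hi A hA hfix0 hfixj
end

section
/- Let p be a prime, 2 ≤ k, fix j with 2 ≤ j ≤ k, fix 0 ≤ i < p, and fix v ∈ 𝔽_p^k. Let b denote the row vector e_j·B_k^i (the j-th row of B_k^i). If a matrix A_{w,l} (with w ∈ 𝔽_p^k and 0 ≤ l < p) fixes both row vectors (1, v) and (1, v + b) under right multiplication, then w = 0 and l = 0, so A_{w,l} is the identity. In other words, the pair {(1, v), (1, v + e_j B_k^i)} is a base for the group \overline{G_k(p)} of all matrices A_{w,l} acting on Ω = {(1, u) : u ∈ 𝔽_p^k}. -/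
/-!
If `A_{w,l}` fixes `(1, v)` and `(1, v + b)`, subtracting the two equations shows that
`b = e_j B^i` is fixed by `B^l`, i.e. row `j` of `B^(i+l)` equals row `j` of `B^i`.
The entries of `B^m` are binomial coefficients, so the `(j, j-1)` entry of `B^m` is `m`;
hence `i + l ≡ i (mod p)`, which forces `l = 0` as `l < p`, and then `w = 0`.
-/

open Matrix Finset

section Bidiagonal

variable {R : Type*} [Semiring R] {k : ℕ}

def lowerBidiagonal (k : ℕ) (R : Type*) [Zero R] [One R] : Matrix (Fin k) (Fin k) R :=
  Matrix.of fun a b => if a = b ∨ (a : ℕ) = (b : ℕ) + 1 then 1 else 0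

theorem ite_choose_succ (m a c : ℕ) :
    (if c ≤ a then ((m + 1).choose (a - c) : R) else 0) =
      (if c ≤ a then (m.choose (a - c) : R) else 0) +
        (if c + 1 ≤ a then (m.choose (a - (c + 1)) : R) else 0) := by
  rcases lt_trichotomy c a with h | rfl | h
  · obtain ⟨d, rfl⟩ := Nat.exists_eq_add_of_lt h
    simp only [show c ≤ c + d + 1 by omega, show c + 1 ≤ c + d + 1 by omega, if_true,
      show c + d + 1 - c = d + 1 by omega, show c + d + 1 - (c + 1) = d by omega,
      Nat.choose_succ_succ', Nat.cast_add, add_comm]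
  · simp
  · simp [h.not_ge, show ¬ c + 1 ≤ a by omega]

theorem lowerBidiagonal_pow_apply (m : ℕ) (a c : Fin k) :
    (lowerBidiagonal k R ^ m) a c = if (c : ℕ) ≤ a then (m.choose (a - c) : R) else 0 := by
  induction m generalizing c with
  | zero =>
    rcases lt_trichotomy (c : ℕ) a with h | h | h
    · simp [one_apply, Fin.ext_iff, h.ne', h.le, Nat.choose_eq_zero_of_lt, Nat.sub_pos_of_lt h]
    · simp [one_apply, Fin.ext_iff, h]
    · simp [one_apply, Fin.ext_iff, h.ne, h.not_ge]
  | succ m ih =>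
    set f : ℕ → R := fun d => if d ≤ a then (m.choose (a - d) : R) else 0 with hf
    calc (lowerBidiagonal k R ^ (m + 1)) a c
        = ∑ d : Fin k,
            ((if (d : ℕ) = c then f d else 0) + (if (d : ℕ) = c + 1 then f d else 0)) := by
          rw [pow_succ, mul_apply]
          refine Fintype.sum_congr _ _ fun d => ?_
          rw [ih, lowerBidiagonal, of_apply]
          by_cases h : (d : ℕ) = c <;> simp [Fin.ext_iff, h, hf]
      _ = f c + (if c + 1 < k then f (c + 1) else 0) := by
          rw [Fin.sum_univ_eq_sum_range
              (fun d => (if d = c then f d else 0) + (if d = c + 1 then f d else 0)),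
            sum_add_distrib, sum_ite_eq', sum_ite_eq']
          simp [c.isLt]
      _ = f c + f (c + 1) := by
          by_cases h : (c : ℕ) + 1 < k
          · rw [if_pos h]
          · have := a.isLt
            simp [h, hf, show ¬ (c : ℕ) + 1 ≤ a by omega]
      _ = _ := (ite_choose_succ m a c).symm

theorem lowerBidiagonal_pow_apply_of_eq_succ (m : ℕ) {a c : Fin k} (h : (a : ℕ) = c + 1) :
    (lowerBidiagonal k R ^ m) a c = m := by
  simp [lowerBidiagonal_pow_apply, h]

end Bidiagonal

theorem dvd_of_lowerBidiagonal_pow_add_row_eq {R : Type*} [Ring R] (p : ℕ) [CharP R p] {k : ℕ}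
    {j : Fin k} (hj : 1 ≤ (j : ℕ)) {i l : ℕ}
    (h : (lowerBidiagonal k R ^ (i + l)) j = (lowerBidiagonal k R ^ i) j) : p ∣ l := by
  let c : Fin k := ⟨j - 1, by omega⟩
  have hjc : (j : ℕ) = c + 1 := by simp [c]; omega
  have := congrFun h c
  rw [lowerBidiagonal_pow_apply_of_eq_succ _ hjc, lowerBidiagonal_pow_apply_of_eq_succ _ hjc,
    Nat.cast_add, add_eq_left] at this
  exact (CharP.cast_eq_zero_iff R p l).mp this

section AffineBlock

variable {R : Type*} [Semiring R] {k : ℕ}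

def affineBlock (w : Fin k → R) (M : Matrix (Fin k) (Fin k) R) :
    Matrix (Fin (k + 1)) (Fin (k + 1)) R :=
  Matrix.of (Fin.cons (Fin.cons 1 w) (fun a => Fin.cons 0 (M a)))

theorem cons_one_vecMul_affineBlock (u w : Fin k → R) (M : Matrix (Fin k) (Fin k) R) :
    Fin.cons 1 u ᵥ* affineBlock w M = Fin.cons 1 (w + u ᵥ* M) := by
  ext c
  refine Fin.cases ?_ (fun c => ?_) c <;> simp [affineBlock, vecMul, dotProduct, Fin.sum_univ_succ]

theorem affineBlock_zero_one : affineBlock (0 : Fin k → R) 1 = 1 := by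
  ext a c
  refine Fin.cases ?_ (fun a => ?_) a <;> refine Fin.cases ?_ (fun c => ?_) c <;>
    simp [affineBlock, one_apply, Fin.succ_ne_zero, eq_comm]

end AffineBlock

theorem base_for_Gkp_general_general {p : ℕ} (k : ℕ)
    (B : Matrix (Fin k) (Fin k) (ZMod p))
    (hB : ∀ a b : Fin k, B a b =
      if a = b ∨ (a : ℕ) = (b : ℕ) + 1 then 1 else 0)
    (j : Fin k) (hj : 1 ≤ (j : ℕ))
    (i : ℕ) (v : Fin k → ZMod p)
    (b : Fin k → ZMod p) (hb : b = Matrix.vecMul (Pi.single j 1) (B ^ i))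
    (w : Fin k → ZMod p) (l : ℕ) (hl : l < p)
    (A : Matrix (Fin (k + 1)) (Fin (k + 1)) (ZMod p))
    (hA : A = Matrix.of (Fin.cons (Fin.cons 1 w) (fun a : Fin k => Fin.cons 0 ((B ^ l) a))))
    (hfixv : Matrix.vecMul (Fin.cons 1 v) A = Fin.cons 1 v)
    (hfixvb : Matrix.vecMul (Fin.cons 1 (v + b)) A = Fin.cons 1 (v + b)) :
    w = 0 ∧ l = 0 ∧ A = 1 := by
  rw [show A = affineBlock w (B ^ l) from hA, cons_one_vecMul_affineBlock,
    (Fin.cons_right_injective _).eq_iff] at hfixv hfixvb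
  have hb_fixed : b ᵥ* B ^ l = b := by
    rw [add_vecMul, ← add_assoc, hfixv] at hfixvb
    exact add_left_cancel hfixvb
  have hrow : (lowerBidiagonal k (ZMod p) ^ (i + l)) j = (lowerBidiagonal k (ZMod p) ^ i) j := by
    rwa [hb, vecMul_vecMul, ← pow_add, single_one_vecMul, single_one_vecMul,
      show B = lowerBidiagonal k (ZMod p) from Matrix.ext hB] at hb_fixed
  obtain rfl : l = 0 :=
    Nat.eq_zero_of_dvd_of_lt (dvd_of_lowerBidiagonal_pow_add_row_eq p hj hrow) hl
  obtain rfl : w = 0 := by simpa using hfixv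
  exact ⟨rfl, rfl, hA.trans affineBlock_zero_one⟩

/-- Fix a prime `p`, `2 ≤ k`, a 1-indexed `j` with `2 ≤ j ≤ k` (encoded by
`j : Fin k` with `1 ≤ j`), `0 ≤ i < p` and `v ∈ 𝔽_p^k`.  Let `b` be the
`j`-th row of `B_k^i`, i.e. `b = e_j · B_k^i`.  If a matrix
`A = A_{w,l} = [[1, w], [0ᵀ, B_k^l]]` (with `0 ≤ l < p`) fixes both row
vectors `(1, v)` and `(1, v + b)` under right multiplication, then `w = 0`,
`l = 0` and `A` is the identity; i.e. `{(1, v), (1, v + e_j B_k^i)}` is a base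
for the group `\overline{G_k(p)}`. -/
theorem base_for_Gkp_general {p : ℕ} [Fact p.Prime] (k : ℕ) (hk : 2 ≤ k)
    (B : Matrix (Fin k) (Fin k) (ZMod p))
    (hB : ∀ a b : Fin k, B a b =
      if a = b ∨ (a : ℕ) = (b : ℕ) + 1 then 1 else 0)
    (j : Fin k) (hj : 1 ≤ (j : ℕ))
    (i : ℕ) (hi : i < p) (v : Fin k → ZMod p)
    (b : Fin k → ZMod p) (hb : b = Matrix.vecMul (Pi.single j 1) (B ^ i))
    (w : Fin k → ZMod p) (l : ℕ) (hl : l < p)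
    (A : Matrix (Fin (k + 1)) (Fin (k + 1)) (ZMod p))
    (hA : A = Matrix.of (Fin.cons (Fin.cons 1 w) (fun a : Fin k => Fin.cons 0 ((B ^ l) a))))
    (hfixv : Matrix.vecMul (Fin.cons 1 v) A = Fin.cons 1 v)
    (hfixvb : Matrix.vecMul (Fin.cons 1 (v + b)) A = Fin.cons 1 (v + b)) :
    w = 0 ∧ l = 0 ∧ A = 1 :=
  base_for_Gkp_general_general k B hB j hj i v b hb w l hl A hA hfixv hfixvb
end

section
/- Let p be a prime and k ≥ 2, and let B_k be the k × k matrix over 𝔽_p with (a,b)-entry 1 if a = b or a = b + 1 and 0 otherwise. Define a simple graph Γ on vertex set 𝔽_p^k by joining u and w whenever u ≠ w and w − u = ± e_j · B_k^i for some 2 ≤ j ≤ k and 0 ≤ i < p. Then Γ is connected. (This graph contains the Saxl graph of the group \overline{G_k(p)} acting on Ω ≅ 𝔽_p^k as a spanning subgraph, so the Saxl graph of \overline{G_k(p)} is connected.) -/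
/-!
The graph is the Cayley graph of `(𝔽_p^k, +)` with respect to the vectors `e_j B^i`, so it is
connected as soon as these vectors span `𝔽_p^k`. Taking `i = 0` gives `e_1, …, e_{k-1}`, and
taking `i = 1` (possible since `p ≥ 2`) gives `e_1 B = e_0 + e_1`, hence also `e_0`.
-/

namespace SimpleGraph

variable {M : Type*} [Group M] {s : Set M}

@[to_additive]
theorem mulCayley_reachable_mul_of_mem_closure {x : M} (hx : x ∈ Subgroup.closure s) (u : M) :
    (mulCayley s).Reachable u (u * x) := by
  induction hx using Subgroup.closure_induction generalizing u with
  | mem g hg =>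
    by_cases h : u * g = u
    · rw [h]
    · exact Adj.reachable <| (mulCayley_adj' s _ _).mpr ⟨Ne.symm h, g, hg, Or.inl rfl⟩
  | one => rw [mul_one]
  | mul x y _ _ hx hy => simpa only [mul_assoc] using (hx u).trans (hy (u * x))
  | inv x _ hx => simpa only [inv_mul_cancel_right] using (hx (u * x⁻¹)).symm

@[to_additive]
theorem mulCayley_connected_of_closure_eq_top (hs : Subgroup.closure s = ⊤) :
    (mulCayley s).Connected := by
  refine (connected_iff_exists_forall_reachable _).mpr ⟨1, fun w => ?_⟩
  have hw : w ∈ Subgroup.closure s := hs ▸ Subgroup.mem_top w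
  simpa only [one_mul] using mulCayley_reachable_mul_of_mem_closure hw 1

theorem addCayley_eq_fromRel_sub_mem {M : Type*} [AddCommGroup M] (s : Set M) :
    addCayley s = fromRel fun u w => w - u ∈ s := by
  ext u w
  rw [addCayley_adj, fromRel_adj, neg_add_eq_sub, neg_add_eq_sub]

end SimpleGraph

theorem AddSubgroup.toZModSubmodule_closure {n : ℕ} {M : Type*} [AddCommGroup M]
    [Module (ZMod n) M] (s : Set M) : toZModSubmodule n (closure s) = Submodule.span (ZMod n) s :=
  le_antisymm
    (show closure s ≤ (Submodule.span (ZMod n) s).toAddSubgroup from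
      closure_le _ |>.mpr Submodule.subset_span)
    (Submodule.span_le.mpr subset_closure)

theorem AddSubgroup.closure_eq_top_of_span_zmod_eq_top {n : ℕ} {M : Type*} [AddCommGroup M]
    [Module (ZMod n) M] {s : Set M} (hs : Submodule.span (ZMod n) s = ⊤) : closure s = ⊤ := by
  rwa [← map_eq_top_iff (toZModSubmodule n), toZModSubmodule_closure]

theorem Pi.span_eq_top_of_single_one_mem {R ι : Type*} [Semiring R] [Finite ι] [DecidableEq ι]
    {s : Set (ι → R)} (hs : ∀ i, Pi.single i 1 ∈ Submodule.span R s) :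
    Submodule.span R s = ⊤ := by
  have := Fintype.ofFinite ι
  rw [eq_top_iff, ← (Pi.basisFun R ι).span_eq, Submodule.span_le]
  rintro _ ⟨i, rfl⟩
  simpa using hs i

namespace Matrix

variable {R : Type*} {k : ℕ} {B : Matrix (Fin k) (Fin k) R}

theorem row_of_lowerBidiagonal [AddMonoidWithOne R]
    (hB : ∀ a b : Fin k, B a b = if a = b ∨ (a : ℕ) = (b : ℕ) + 1 then 1 else 0)
    {j i : Fin k} (hji : (j : ℕ) = i + 1) :
    B.row j = (Pi.single j 1 : Fin k → R) + Pi.single i 1 := by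
  have hij : i ≠ j := fun h => by omega
  ext b
  rw [row_apply, hB, Pi.add_apply, Pi.single_apply, Pi.single_apply]
  by_cases hbj : b = j
  · simp [hbj, hij.symm]
  · by_cases hbi : b = i
    · simp [hbi, hij, hji]
    · have : (j : ℕ) ≠ b + 1 := fun h => hbi (Fin.ext (by omega))
      simp [hbj, hbi, Ne.symm hbj, this]

theorem span_single_vecMul_pow_eq_top_of_lowerBidiagonal [Ring R] (hk : 2 ≤ k) {n : ℕ}
    (hn : 2 ≤ n)
    (hB : ∀ a b : Fin k, B a b = if a = b ∨ (a : ℕ) = (b : ℕ) + 1 then 1 else 0) :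
    Submodule.span R
      {v | ∃ j : Fin k, 1 ≤ (j : ℕ) ∧ ∃ i : ℕ, i < n ∧ v = vecMul (Pi.single j 1) (B ^ i)} = ⊤ := by
  set S := {v | ∃ j : Fin k, 1 ≤ (j : ℕ) ∧ ∃ i : ℕ, i < n ∧ v = vecMul (Pi.single j 1) (B ^ i)}
  have hS : ∀ j : Fin k, 1 ≤ (j : ℕ) → Pi.single j 1 ∈ S := fun j hj =>
    ⟨j, hj, 0, by omega, by rw [pow_zero, vecMul_one]⟩
  refine Pi.span_eq_top_of_single_one_mem fun m => ?_
  rcases Nat.eq_zero_or_pos (m : ℕ) with hm | hm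
  · have hj1 : ((⟨1, hk⟩ : Fin k) : ℕ) = m + 1 := by simp [hm]
    have hrow : vecMul (Pi.single ⟨1, hk⟩ 1) (B ^ 1) ∈ S := ⟨_, le_rfl, 1, hn, rfl⟩
    rw [pow_one, single_one_vecMul, row_of_lowerBidiagonal hB hj1] at hrow
    simpa using Submodule.sub_mem _ (Submodule.subset_span hrow)
      (Submodule.subset_span (hS ⟨1, hk⟩ le_rfl))
  · exact Submodule.subset_span (hS m hm)

end Matrix

/-- For a prime `p` and `k ≥ 2`, the graph on vertex set `𝔽_p^k` in which `u`
and `w` are joined whenever `u ≠ w` and `w − u = ± e_j · B_k^i` for some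
`2 ≤ j ≤ k` (encoded by `j : Fin k` with `1 ≤ j`) and `0 ≤ i < p` is
connected.  (This graph is a spanning subgraph of the Saxl graph of
`\overline{G_k(p)}`, so the Saxl graph is connected.) -/
theorem saxl_subgraph_connected {p : ℕ} [Fact p.Prime] (k : ℕ) (hk : 2 ≤ k)
    (B : Matrix (Fin k) (Fin k) (ZMod p))
    (hB : ∀ a b : Fin k, B a b =
      if a = b ∨ (a : ℕ) = (b : ℕ) + 1 then 1 else 0) :
    (SimpleGraph.fromRel (fun u w : Fin k → ZMod p =>
      ∃ j : Fin k, 1 ≤ (j : ℕ) ∧ ∃ i : ℕ, i < p ∧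
        w - u = Matrix.vecMul (Pi.single j 1) (B ^ i))).Connected := by
  have hspan := Matrix.span_single_vecMul_pow_eq_top_of_lowerBidiagonal (R := ZMod p) hk
    (Fact.out : p.Prime).two_le hB
  have hconn := SimpleGraph.addCayley_connected_of_closure_eq_top
    (AddSubgroup.closure_eq_top_of_span_zmod_eq_top hspan)
  rwa [SimpleGraph.addCayley_eq_fromRel_sub_mem] at hconn
end

section
/- Let G be a group acting on a finite set Ω of size n, let λ ≥ 1, let r be a natural number, and set r' = ⌊r/λ⌋. Let 𝒰 be an uncovering-by-bases of strength r' for G. Suppose E ⊆ {1, …, λ} × Ω is a set of 'error positions' with |E| ≤ r. Then there exist a component index i ∈ {1, …, λ} and a base B ∈ 𝒰 such that B is disjoint from {x ∈ Ω : (i, x) ∈ E}. (This is the correctness guarantee for the decoding algorithm for twisted permutation codes: if a received word contains at most r_tw errors, some component contains at most r' errors, and some base in the UBB avoids all error positions of that component, so the algorithm is guaranteed to decode successfully.) -/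
/-! Since `|E| ≤ r < l * (⌊r / l⌋ + 1)`, the pigeonhole principle gives a component `i` with at
most `⌊r / l⌋` error positions, and the uncovering property supplies a base avoiding them. -/

namespace Set

variable {ι α : Type*}

theorem ncard_preimage_prodMk (E : Set (ι × α)) (i : ι) :
    (Prod.mk i ⁻¹' E).ncard = {p ∈ E | p.1 = i}.ncard := by
  rw [← ncard_image_of_injective _ (Prod.mk_right_injective i), image_preimage_eq_inter_range]
  congr 1
  ext ⟨j, x⟩
  simp [eq_comm]

theorem Finite.of_finite_preimage_prodMk [Finite ι] {E : Set (ι × α)}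
    (h : ∀ i, (Prod.mk i ⁻¹' E).Finite) : E.Finite :=
  (finite_iUnion fun i => (h i).image (Prod.mk i)).subset fun p hp =>
    mem_iUnion.mpr ⟨p.1, p.2, hp, rfl⟩

theorem exists_ncard_preimage_prodMk_lt_of_ncard_lt_mul [Fintype ι] {E : Set (ι × α)} {n : ℕ}
    (h : E.ncard < Fintype.card ι * n) : ∃ i, (Prod.mk i ⁻¹' E).ncard < n := by
  classical
  by_cases hE : E.Finite
  · obtain ⟨i, -, hi⟩ := Finset.exists_card_fiber_lt_of_card_lt_mul (f := Prod.fst)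
      (t := Finset.univ) (by rwa [← ncard_eq_toFinset_card E hE])
    refine ⟨i, ?_⟩
    rw [← ncard_coe_finset] at hi
    simpa [ncard_preimage_prodMk] using hi
  · -- some slice is infinite, and `ncard` of an infinite set is `0`
    obtain ⟨i, hi⟩ : ∃ i, (Prod.mk i ⁻¹' E).Infinite := by
      by_contra! hfin
      exact hE (Finite.of_finite_preimage_prodMk hfin)
    exact ⟨i, hi.ncard ▸ Nat.pos_of_mul_pos_left (h.trans_le' (Nat.zero_le _))⟩

end Set

theorem decoding_algorithm_correctness_general {Ω : Type*}
    (l r : ℕ) (hl : 1 ≤ l) (𝒰 : Set (Set Ω))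
    (hucov : ∀ S : Set Ω, S.ncard ≤ r / l → ∃ B ∈ 𝒰, Disjoint S B)
    (E : Set (Fin l × Ω)) (hE : E.ncard ≤ r) :
    ∃ i : Fin l, ∃ B ∈ 𝒰, Disjoint {x : Ω | (i, x) ∈ E} B := by
  obtain ⟨i, hi⟩ := Set.exists_ncard_preimage_prodMk_lt_of_ncard_lt_mul (n := r / l + 1)
    (hE.trans_lt (by simpa using Nat.lt_mul_div_succ r hl))
  exact ⟨i, hucov _ (Nat.lt_succ_iff.mp hi)⟩

/-- Correctness guarantee for the decoding algorithm: let `G` act on a finite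
set `Ω`, let `l ≥ 1` (the number of components), `r` a natural number, and let
`𝒰` be an uncovering-by-bases of strength `r' = ⌊r / l⌋` for `G`.  If
`E ⊆ Fin l × Ω` is a set of error positions with `|E| ≤ r`, then there is a
component `i` and a base `B ∈ 𝒰` disjoint from the error positions of
component `i`. -/
theorem decoding_algorithm_correctness {G Ω : Type*} [Group G] [MulAction G Ω]
    [Fintype Ω] (l r : ℕ) (hl : 1 ≤ l) (𝒰 : Set (Set Ω))
    (hbases : ∀ B ∈ 𝒰, ∀ g : G, (∀ x ∈ B, g • x = x) → g = 1)
    (hucov : ∀ S : Set Ω, S.ncard ≤ r / l → ∃ B ∈ 𝒰, Disjoint S B)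
    (E : Set (Fin l × Ω)) (hE : E.ncard ≤ r) :
    ∃ i : Fin l, ∃ B ∈ 𝒰, Disjoint {x : Ω | (i, x) ∈ E} B :=
  decoding_algorithm_correctness_general l r hl 𝒰 hucov E hE
end

section
/- Let F be a finite field of characteristic 2, let A ∈ SL(2, F), and let b ∈ F². Define g : F² → F² by g(x) = A·x + b, and suppose g has exactly |F| fixed points (the maximum possible for a non-identity element). Then g has order 2, i.e., g(g(x)) = x for all x ∈ F². (This is part of the argument that in ASL(2, 2^m) every element with 2^m fixed points has order 2, used to show that twisting cannot improve the minimum distance for ASL(2, 2^m).) -/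
/-!
Since `|F| ≥ 2`, `g` has two fixed points `x₀ ≠ y₀`, and `(A - 1)(x₀ - y₀) = 0`, so
`det (A - 1) = 0`. For a `2 × 2` matrix `det (A - 1) = det A - tr A + 1`, hence `tr A = 2 = 0`,
and Cayley–Hamilton gives `A² = tr A • A - det A • 1 = -1 = 1`. Finally
`g (g x) = A² x + (A b + b)` and `A b + b = (1 - A²) x₀ = 0` because `b = x₀ - A x₀`.
-/

namespace Matrix

variable {R : Type*} [CommRing R]

theorem det_sub_one_fin_two (M : Matrix (Fin 2) (Fin 2) R) :
    (M - 1).det = M.det - M.trace + 1 := by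
  simp only [det_fin_two, trace_fin_two, sub_apply, one_apply_eq, one_apply_ne, ne_eq,
    zero_ne_one, one_ne_zero, not_false_eq_true]
  ring

theorem mul_self_fin_two (M : Matrix (Fin 2) (Fin 2) R) :
    M * M = M.trace • M - M.det • 1 := by
  ext i j
  fin_cases i <;> fin_cases j <;>
    simp only [Fin.isValue, Fin.zero_eta, Fin.mk_one, mul_apply, Fin.sum_univ_two, trace_fin_two,
      det_fin_two, sub_apply, smul_apply, smul_eq_mul, one_apply_eq, one_apply_ne, ne_eq,
      zero_ne_one, one_ne_zero, not_false_eq_true, mul_one, mul_zero, sub_zero] <;> ring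

theorem mul_self_eq_one_of_det_sub_one_eq_zero [CharP R 2] {M : Matrix (Fin 2) (Fin 2) R}
    (hdet : M.det = 1) (hdet_sub : (M - 1).det = 0) : M * M = 1 := by
  have htrace : M.trace = 0 := by
    rw [det_sub_one_fin_two, hdet] at hdet_sub
    linear_combination -hdet_sub + CharTwo.two_eq_zero (R := R)
  rw [mul_self_fin_two, htrace, hdet, zero_smul, zero_sub, one_smul, CharTwo.neg_eq]

theorem det_sub_one_eq_zero_of_mulVec_add_eq_self {K n : Type*} [Field K] [Fintype n]
    [DecidableEq n] {M : Matrix n n K} {b x y : n → K} (hx : M *ᵥ x + b = x)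
    (hy : M *ᵥ y + b = y) (hxy : x ≠ y) : (M - 1).det = 0 := by
  rw [← exists_mulVec_eq_zero_iff]
  refine ⟨x - y, sub_ne_zero_of_ne hxy, ?_⟩
  rw [sub_mulVec, one_mulVec, mulVec_sub]
  linear_combination hx - hy

theorem mulVec_mulVec_add_add_eq_self {n : Type*} [Fintype n] [DecidableEq n]
    {M : Matrix n n R} (hM : M * M = 1) {b x₀ : n → R} (hx₀ : M *ᵥ x₀ + b = x₀) (x : n → R) :
    M *ᵥ (M *ᵥ x + b) + b = x := by
  have hb : b = x₀ - M *ᵥ x₀ := by linear_combination hx₀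
  rw [mulVec_add, mulVec_mulVec, hM, one_mulVec, hb, mulVec_sub, mulVec_mulVec, hM, one_mulVec]
  abel

end Matrix

/-- Let `F` be a finite field of characteristic 2, `A ∈ SL(2, F)` and
`b ∈ F²`, and let `g : F² → F²` be the affine map `g x = A·x + b`.  If `g` has
exactly `|F|` fixed points (the maximum possible for a non-identity element),
then `g` has order 2: `g (g x) = x` for all `x`. -/
theorem asl2_max_fixed_points_order_two {F : Type*} [Field F] [Fintype F]
    [CharP F 2] (A : Matrix.SpecialLinearGroup (Fin 2) F) (b : Fin 2 → F)
    (g : (Fin 2 → F) → (Fin 2 → F))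
    (hg : ∀ x, g x = (A : Matrix (Fin 2) (Fin 2) F).mulVec x + b)
    (hfix : {x : Fin 2 → F | g x = x}.ncard = Fintype.card F) :
    ∀ x, g (g x) = x := by
  obtain ⟨x₀, y₀, hx₀, hy₀, hne⟩ := (Set.one_lt_ncard_iff (Set.toFinite _)).mp
    (hfix ▸ Fintype.one_lt_card)
  simp only [Set.mem_ofPred_eq, hg] at hx₀ hy₀
  have hA : (A : Matrix (Fin 2) (Fin 2) F) * A = 1 :=
    Matrix.mul_self_eq_one_of_det_sub_one_eq_zero A.2
      (Matrix.det_sub_one_eq_zero_of_mulVec_add_eq_self hx₀ hy₀ hne)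
  intro x
  rw [hg, hg]
  exact Matrix.mulVec_mulVec_add_add_eq_self hA hx₀ x
end
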